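/- arXiv:1906.08004 — 4 statements merged into one kernel-verified Lean document; each statement's English description precedes it below -/
import Mathlib

section
/- Let α, β > −1, let −1 < b < 1, and define r_b(n) = (1−b)^{α/2+1/4}(1+b)^{β/2+1/4} p_n^{(α,β)}(b) and R_b(n) = ((1−b)^{α/2+3/4}(1+b)^{β/2+3/4}/(2n+α+β+1)) (p_n^{(α,β)})'(b). Then for every finitely supported sequence f on ℕ and every n ∈ ℕ, T_b f(n) = r_b(n)·H(R_b f)(n) − R_b(n)·H(r_b f)(n) − r_b(n)·Q_{α+β+1}(R_b f)(n) − R_b(n)·Q_{α+β+1}(r_b f)(n) + f(n)·K_b(n,n), where R_b f and r_b f denote the pointwise products m ↦ R_b(m)f(m) and m ↦ r_b(m)f(m). -/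
open MeasureTheory Real Filter

/-- The Jacobi polynomial `P_n^{(a,b)}` defined through Rodrigues' formula. -/
noncomputable def jacobiP (a b : ℝ) (n : ℕ) (x : ℝ) : ℝ :=
  ((-1 : ℝ) ^ n / (2 ^ n * (Nat.factorial n : ℝ))) *
    (1 - x) ^ (-a) * (1 + x) ^ (-b) *
    iteratedDeriv n (fun y : ℝ => (1 - y) ^ (a + (n : ℝ)) * (1 + y) ^ (b + (n : ℝ))) x

/-- The normalizing constant `w_n^{(a,b)}` making the Jacobi polynomials orthonormal. -/
noncomputable def jacobiNorm (a b : ℝ) (n : ℕ) : ℝ :=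
  if n = 0 then
    Real.sqrt (Real.Gamma (a + b + 2) /
      ((2 : ℝ) ^ (a + b + 1) * Real.Gamma (a + 1) * Real.Gamma (b + 1)))
  else
    Real.sqrt ((2 * (n : ℝ) + a + b + 1) * (Nat.factorial n : ℝ) *
        Real.Gamma ((n : ℝ) + a + b + 1) /
      ((2 : ℝ) ^ (a + b + 1) * Real.Gamma ((n : ℝ) + a + 1) * Real.Gamma ((n : ℝ) + b + 1)))

/-- The orthonormal Jacobi polynomial `p_n^{(a,b)}`. -/
noncomputable def pJ (a b : ℝ) (n : ℕ) (x : ℝ) : ℝ := jacobiNorm a b n * jacobiP a b n x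

/-- The kernel `K_{[lo,hi]}(m,n) = ∫_{lo}^{hi} p_m p_n dμ_{a,b}`. -/
noncomputable def jacobiKernel (a b lo hi : ℝ) (m n : ℕ) : ℝ :=
  ∫ x in lo..hi, pJ a b m x * pJ a b n x * ((1 - x) ^ a * (1 + x) ^ b)

/-- The multiplier operator `T_{[lo,hi]} f (n) = ∑_m f(m) K_{[lo,hi]}(m,n)`. -/
noncomputable def jacobiT (a b lo hi : ℝ) (f : ℕ → ℝ) (n : ℕ) : ℝ :=
  ∑' m, f m * jacobiKernel a b lo hi m n

/-- The discrete Hilbert transform `H f (n) = ∑_{m ≠ n} f(m)/(n - m)`. -/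
noncomputable def discHilbert (f : ℕ → ℝ) (n : ℕ) : ℝ :=
  ∑' m, if m = n then 0 else f m / ((n : ℝ) - (m : ℝ))

/-- The operator `Q_a f (n) = ∑_{m ≠ n} f(m)/(n + m + a)`. -/
noncomputable def discQ (a : ℝ) (f : ℕ → ℝ) (n : ℕ) : ℝ :=
  ∑' m, if m = n then 0 else f m / ((n : ℝ) + (m : ℝ) + a)

/-- The sequence `r_b(n)`. -/
noncomputable def rbSeq (a b' b : ℝ) (n : ℕ) : ℝ :=
  (1 - b) ^ (a / 2 + 1 / 4) * (1 + b) ^ (b' / 2 + 1 / 4) * pJ a b' n b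

/-- The sequence `R_b(n)`. -/
noncomputable def RbSeq (a b' b : ℝ) (n : ℕ) : ℝ :=
  (1 - b) ^ (a / 2 + 3 / 4) * (1 + b) ^ (b' / 2 + 3 / 4) / (2 * (n : ℝ) + a + b' + 1) *
    deriv (pJ a b' n) b

/-!
On `(-1, 1)` the Rodrigues formula defines a polynomial `P_n`, which solves the Jacobi equation
`(1 - x²) y'' + (β - α - (α + β + 2) x) y' + λ_n y = 0` with `λ_n = n (n + α + β + 1)`.
Hence the weighted Wronskian `(1 - x)^(α+1) (1 + x)^(β+1) (P_m' P_n - P_n' P_m)` has derivative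
`(λ_n - λ_m) P_m P_n` times the weight and vanishes at `-1`, so
`(n - m)(n + m + α + β + 1) K_b(m, n)` is the Wronskian at `b`, which equals
`r_b(n) R_b(m) (2m + α + β + 1) - R_b(n) r_b(m) (2n + α + β + 1)`.
Since `2m + α + β + 1` and `2n + α + β + 1` are the difference and the sum of `n + m + α + β + 1`
and `n - m`, partial fractions turn `K_b(m, n)` for `m ≠ n` into the kernels of `H` and
`Q_{α+β+1}`; the diagonal `m = n` contributes the last term.
-/

open Polynomial

/-- `(1 - x)^(a+n-k) (1 + x)^(b+n-k) · rodriguesPoly a b n k` is the `k`-th derivative of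
`(1 - x)^(a+n) (1 + x)^(b+n)` on `(-1, 1)`. -/
noncomputable def rodriguesPoly (a b : ℝ) (n : ℕ) : ℕ → ℝ[X]
  | 0 => 1
  | k + 1 => (1 - X ^ 2) * derivative (rodriguesPoly a b n k)
      + (C (b - a) - C (a + b + 2 * n - 2 * k) * X) * rodriguesPoly a b n k

namespace rodriguesPoly

variable (a b : ℝ) (n : ℕ)

theorem succ_eq (k : ℕ) :
    rodriguesPoly a b n (k + 1) = (1 - X ^ 2) * derivative (rodriguesPoly a b n k)
      + (C (b - a) - C (a + b + 2 * n - 2 * k) * X) * rodriguesPoly a b n k := rfl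

theorem derivative_succ (k : ℕ) :
    derivative (rodriguesPoly a b n (k + 1)) =
      C (-((k + 1) * (a + b + 2 * n - k))) * rodriguesPoly a b n k := by
  induction k with
  | zero => simp [rodriguesPoly]
  | succ k ih =>
    have hk := succ_eq a b n k
    rw [succ_eq a b n (k + 1)]
    simp only [derivative_add, derivative_mul, derivative_sub, derivative_one, derivative_X_sq,
      derivative_C, derivative_X, ih]
    simp only [map_add, map_sub, map_mul, map_neg, map_natCast, map_one, map_ofNat] at hk ⊢
    push_cast
    linear_combination ((k + 1 : ℝ[X]) * (C a + C b + 2 * n - k)) * hk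

theorem ode :
    (1 - X ^ 2) * derivative (derivative (rodriguesPoly a b n n))
      + (C (b - a) - C (a + b + 2) * X) * derivative (rodriguesPoly a b n n)
      + C (n * (n + a + b + 1)) * rodriguesPoly a b n n = 0 := by
  have h := derivative_succ a b n n
  rw [succ_eq] at h
  simp only [derivative_add, derivative_mul, derivative_sub, derivative_one, derivative_X_sq,
    derivative_C, derivative_X] at h
  simp only [map_add, map_sub, map_mul, map_neg, map_natCast, map_one, map_ofNat] at h ⊢
  linear_combination h

end rodriguesPoly

theorem hasDerivAt_rpow_mul_rpow_mul_eval (p q : ℝ) (P : ℝ[X]) {x : ℝ}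
    (hx : x ∈ Set.Ioo (-1 : ℝ) 1) :
    HasDerivAt (fun y => (1 - y) ^ p * (1 + y) ^ q * P.eval y)
      ((1 - x) ^ (p - 1) * (1 + x) ^ (q - 1) *
        ((1 - X ^ 2) * derivative P + (C q * (1 - X) - C p * (1 + X)) * P).eval x) x := by
  have hx₁ : 0 < 1 - x := by linarith [hx.2]
  have hx₂ : 0 < 1 + x := by linarith [hx.1]
  have h₁ : HasDerivAt (fun y => (1 - y) ^ p) (-1 * p * (1 - x) ^ (p - 1)) x :=
    ((hasDerivAt_id x).const_sub 1).rpow_const (Or.inl hx₁.ne')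
  have h₂ : HasDerivAt (fun y => (1 + y) ^ q) (1 * q * (1 + x) ^ (q - 1)) x :=
    ((hasDerivAt_id x).const_add 1).rpow_const (Or.inl hx₂.ne')
  have h : HasDerivAt (fun y => (1 - y) ^ p * (1 + y) ^ q * P.eval y) _ x :=
    (h₁.mul h₂).mul (P.hasDerivAt x)
  convert h using 1
  rw [rpow_sub_one hx₁.ne', rpow_sub_one hx₂.ne']
  simp only [eval_add, eval_mul, eval_sub, eval_one, eval_pow, eval_X, eval_C, Pi.mul_apply]
  field_simp
  ring

theorem iteratedDeriv_rodrigues (a b : ℝ) (n k : ℕ) {x : ℝ} (hx : x ∈ Set.Ioo (-1 : ℝ) 1) :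
    iteratedDeriv k (fun y => (1 - y) ^ (a + n) * (1 + y) ^ (b + n)) x
      = (1 - x) ^ (a + n - k) * (1 + x) ^ (b + n - k) * (rodriguesPoly a b n k).eval x := by
  induction k generalizing x with
  | zero => simp [rodriguesPoly]
  | succ k ih =>
    have hev : iteratedDeriv k (fun y => (1 - y) ^ (a + n) * (1 + y) ^ (b + n)) =ᶠ[nhds x]
        fun y => (1 - y) ^ (a + n - k) * (1 + y) ^ (b + n - k) * (rodriguesPoly a b n k).eval y :=
      eventually_of_mem (isOpen_Ioo.mem_nhds hx) fun y hy => ih hy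
    rw [iteratedDeriv_succ, hev.deriv_eq,
      (hasDerivAt_rpow_mul_rpow_mul_eval _ _ _ hx).deriv, rodriguesPoly.succ_eq]
    push_cast
    congr 2
    · ring_nf
    · ring_nf
    · simp only [map_add, map_sub, map_mul, map_natCast, map_ofNat]
      ring

/-- On `(-1, 1)` the Rodrigues formula defining `pJ` reduces to this polynomial. -/
noncomputable def jacobiPoly (a b : ℝ) (n : ℕ) : ℝ[X] :=
  C (jacobiNorm a b n * ((-1) ^ n / (2 ^ n * n.factorial))) * rodriguesPoly a b n n

namespace jacobiPoly

variable (a b : ℝ)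

theorem eval_eq_pJ (n : ℕ) {x : ℝ} (hx : x ∈ Set.Ioo (-1 : ℝ) 1) :
    (jacobiPoly a b n).eval x = pJ a b n x := by
  have hx₁ : 0 < 1 - x := by linarith [hx.2]
  have hx₂ : 0 < 1 + x := by linarith [hx.1]
  rw [pJ, jacobiP, iteratedDeriv_rodrigues a b n n hx, jacobiPoly, eval_mul, eval_C,
    add_sub_cancel_right, add_sub_cancel_right, rpow_neg hx₁.le, rpow_neg hx₂.le]
  field_simp

theorem eval_derivative_eq_deriv_pJ (n : ℕ) {x : ℝ} (hx : x ∈ Set.Ioo (-1 : ℝ) 1) :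
    (derivative (jacobiPoly a b n)).eval x = deriv (pJ a b n) x := by
  have hev : (fun y => (jacobiPoly a b n).eval y) =ᶠ[nhds x] pJ a b n :=
    eventually_of_mem (isOpen_Ioo.mem_nhds hx) fun y hy => eval_eq_pJ a b n hy
  rw [← hev.deriv_eq, Polynomial.deriv]

theorem ode (n : ℕ) :
    (1 - X ^ 2) * derivative (derivative (jacobiPoly a b n))
      + (C (b - a) - C (a + b + 2) * X) * derivative (jacobiPoly a b n)
      + C (n * (n + a + b + 1)) * jacobiPoly a b n = 0 := by
  simp only [jacobiPoly, derivative_C_mul]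
  linear_combination C (jacobiNorm a b n * ((-1) ^ n / (2 ^ n * n.factorial))) *
    rodriguesPoly.ode a b n

end jacobiPoly

theorem derivative_jacobiPoly_zero (a b : ℝ) : derivative (jacobiPoly a b 0) = 0 := by
  simp [jacobiPoly, rodriguesPoly]

noncomputable def jacobiWronskian (a b : ℝ) (m n : ℕ) : ℝ[X] :=
  derivative (jacobiPoly a b m) * jacobiPoly a b n
    - derivative (jacobiPoly a b n) * jacobiPoly a b m

section Kernel

variable (a b : ℝ)

theorem hasDerivAt_jacobiWronskian (m n : ℕ) {x : ℝ} (hx : x ∈ Set.Ioo (-1 : ℝ) 1) :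
    HasDerivAt (fun y => (1 - y) ^ (a + 1) * (1 + y) ^ (b + 1) * (jacobiWronskian a b m n).eval y)
      ((n * (n + a + b + 1) - m * (m + a + b + 1)) *
        ((1 - x) ^ a * (1 + x) ^ b * ((jacobiPoly a b m).eval x * (jacobiPoly a b n).eval x)))
      x := by
  convert hasDerivAt_rpow_mul_rpow_mul_eval (a + 1) (b + 1) (jacobiWronskian a b m n) hx using 1
  have hode := fun k => congrArg (eval x) (jacobiPoly.ode a b k)
  simp only [add_sub_cancel_right, jacobiWronskian, derivative_sub, derivative_mul, eval_add,
    eval_mul, eval_sub, eval_one, eval_pow, eval_X, eval_C, eval_zero] at hode ⊢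
  linear_combination ((1 - x) ^ a * (1 + x) ^ b) *
    ((jacobiPoly a b m).eval x * hode n - (jacobiPoly a b n).eval x * hode m)

theorem intervalIntegrable_one_add_rpow_mul {b t : ℝ} (hb : -1 < b) {g : ℝ → ℝ}
    (hg : ContinuousOn g (Set.uIcc (-1) t)) :
    IntervalIntegrable (fun x => (1 + x) ^ b * g x) volume (-1) t := by
  have h := (intervalIntegral.intervalIntegrable_rpow' (a := 0) (b := t + 1) hb).comp_add_right 1
  simp only [zero_sub, add_sub_cancel_right] at h
  simpa only [add_comm] using h.mul_continuousOn hg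

/-- Integrating the Wronskian identity; the weight `(1 + x)^(b+1)` kills the boundary term
at `-1`. -/
theorem jacobiKernel_mul_eigenvalue_sub (hb : -1 < b) {t : ℝ} (ht₁ : -1 ≤ t) (ht₂ : t < 1)
    (m n : ℕ) :
    (n * (n + a + b + 1) - m * (m + a + b + 1)) * jacobiKernel a b (-1) t m n
      = (1 - t) ^ (a + 1) * (1 + t) ^ (b + 1) * (jacobiWronskian a b m n).eval t := by
  have hpoly : jacobiKernel a b (-1) t m n = ∫ x in (-1)..t,
      (1 - x) ^ a * (1 + x) ^ b * ((jacobiPoly a b m).eval x * (jacobiPoly a b n).eval x) := by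
    refine intervalIntegral.integral_congr_ae (ae_of_all _ fun x hx => ?_)
    rw [Set.uIoc_of_le ht₁] at hx
    have hx' : x ∈ Set.Ioo (-1 : ℝ) 1 := ⟨hx.1, hx.2.trans_lt ht₂⟩
    simp only [jacobiPoly.eval_eq_pJ a b _ hx']
    ring
  have hcontW : ContinuousOn
      (fun y => (1 - y) ^ (a + 1) * (1 + y) ^ (b + 1) * (jacobiWronskian a b m n).eval y)
      (Set.Icc (-1) t) := by
    refine ContinuousOn.mul (ContinuousOn.mul ?_ ?_)
      (jacobiWronskian a b m n).continuous.continuousOn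
    · exact ContinuousOn.rpow_const (by fun_prop) fun x hx => Or.inl (by linarith [hx.2])
    · exact ContinuousOn.rpow_const (by fun_prop) fun x _ => Or.inr (by linarith)
  have hcont : ContinuousOn (fun x => (n * (n + a + b + 1) - m * (m + a + b + 1)) * (1 - x) ^ a *
      ((jacobiPoly a b m).eval x * (jacobiPoly a b n).eval x)) (Set.uIcc (-1) t) := by
    refine ContinuousOn.mul (continuousOn_const.mul ?_) (by fun_prop)
    rw [Set.uIcc_of_le ht₁]
    exact ContinuousOn.rpow_const (by fun_prop) fun x hx => Or.inl (by linarith [hx.2])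
  have hint : IntervalIntegrable (fun x => (n * (n + a + b + 1) - m * (m + a + b + 1)) *
      ((1 - x) ^ a * (1 + x) ^ b * ((jacobiPoly a b m).eval x * (jacobiPoly a b n).eval x)))
      volume (-1) t := by
    convert intervalIntegrable_one_add_rpow_mul hb hcont using 1
    funext x
    ring
  rw [hpoly, ← intervalIntegral.integral_const_mul,
    intervalIntegral.integral_eq_sub_of_hasDerivAt_of_le ht₁ hcontW
      (fun x hx => hasDerivAt_jacobiWronskian a b m n ⟨hx.1, hx.2.trans ht₂⟩) hint]
  simp [zero_rpow (by linarith : b + 1 ≠ 0)]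

end Kernel

section Sequences

variable {α β b : ℝ}

theorem rbSeq_eq (hb : b ∈ Set.Ioo (-1 : ℝ) 1) (n : ℕ) :
    rbSeq α β b n = (1 - b) ^ (α / 2 + 1 / 4) * (1 + b) ^ (β / 2 + 1 / 4) *
      (jacobiPoly α β n).eval b := by
  rw [rbSeq, jacobiPoly.eval_eq_pJ α β n hb]

theorem RbSeq_mul (hαβ : -2 < α + β) (hb : b ∈ Set.Ioo (-1 : ℝ) 1) (n : ℕ) :
    RbSeq α β b n * (2 * n + α + β + 1) = (1 - b) ^ (α / 2 + 3 / 4) * (1 + b) ^ (β / 2 + 3 / 4) *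
      (derivative (jacobiPoly α β n)).eval b := by
  rw [RbSeq, jacobiPoly.eval_derivative_eq_deriv_pJ α β n hb]
  -- the junk division by `0` in `RbSeq` only occurs for `n = 0`, where `pJ` is constant
  rcases eq_or_ne (2 * (n : ℝ) + α + β + 1) 0 with h | h
  · obtain rfl : n = 0 := by
      have : (n : ℝ) < 1 := by linarith
      exact Nat.lt_one_iff.mp (by exact_mod_cast this)
    rw [← jacobiPoly.eval_derivative_eq_deriv_pJ α β 0 hb, derivative_jacobiPoly_zero]
    simp
  · field_simp

theorem jacobiKernel_mul_eq (hαβ : -2 < α + β) (hβ : -1 < β) (hb : b ∈ Set.Ioo (-1 : ℝ) 1)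
    (m n : ℕ) :
    ((n - m) * (n + m + (α + β + 1))) * jacobiKernel α β (-1) b m n
      = rbSeq α β b n * (RbSeq α β b m * (2 * m + α + β + 1))
        - RbSeq α β b n * (2 * n + α + β + 1) * rbSeq α β b m := by
  have hb₁ : 0 < 1 - b := by linarith [hb.2]
  have hb₂ : 0 < 1 + b := by linarith [hb.1]
  have hpow : ∀ {x : ℝ}, 0 < x → ∀ γ : ℝ, x ^ (γ / 2 + 1 / 4) * x ^ (γ / 2 + 3 / 4) = x ^ (γ + 1) :=
    fun hx γ => by rw [← rpow_add hx]; ring_nf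
  have hK := jacobiKernel_mul_eigenvalue_sub α β hβ hb.1.le hb.2 m n
  rw [← hpow hb₁ α, ← hpow hb₂ β, jacobiWronskian] at hK
  rw [RbSeq_mul hαβ hb, RbSeq_mul hαβ hb, rbSeq_eq hb, rbSeq_eq hb]
  simp only [eval_sub, eval_mul] at hK
  linear_combination hK

theorem jacobiKernel_of_ne (hαβ : -2 < α + β) (hβ : -1 < β) (hb : b ∈ Set.Ioo (-1 : ℝ) 1)
    {m n : ℕ} (hmn : m ≠ n) :
    jacobiKernel α β (-1) b m n =
      rbSeq α β b n * RbSeq α β b m / (n - m) - RbSeq α β b n * rbSeq α β b m / (n - m)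
        - rbSeq α β b n * RbSeq α β b m / (n + m + (α + β + 1))
        - RbSeq α β b n * rbSeq α β b m / (n + m + (α + β + 1)) := by
  have hsub : (n : ℝ) - m ≠ 0 := sub_ne_zero.mpr (by exact_mod_cast hmn.symm)
  have hadd : (n : ℝ) + m + (α + β + 1) ≠ 0 := by
    have : (1 : ℝ) ≤ n + m := by exact_mod_cast (by omega : 1 ≤ n + m)
    linarith
  have h := jacobiKernel_mul_eq hαβ hβ hb m n
  field_simp
  linear_combination h

end Sequences

theorem jacobi_multiplier_decomposition
    (α β : ℝ) (hα : -1 < α) (hβ : -1 < β) (b : ℝ) (hb1 : -1 < b) (hb2 : b < 1)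
    (f : ℕ → ℝ) (hf : (Function.support f).Finite) (n : ℕ) :
    jacobiT α β (-1) b f n =
      rbSeq α β b n * discHilbert (fun m => RbSeq α β b m * f m) n -
        RbSeq α β b n * discHilbert (fun m => rbSeq α β b m * f m) n -
        rbSeq α β b n * discQ (α + β + 1) (fun m => RbSeq α β b m * f m) n -
        RbSeq α β b n * discQ (α + β + 1) (fun m => rbSeq α β b m * f m) n +
        f n * jacobiKernel α β (-1) b n n := by
  classical
  have hαβ : -2 < α + β := by linarith
  set s := insert n hf.toFinset
  have htsum : ∀ g : ℕ → ℝ, (∀ m, f m = 0 → g m = 0) → ∑' m, g m = ∑ m ∈ s, g m :=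
    fun g hg => tsum_eq_sum fun m hm =>
      hg m (by_contra fun h => hm (Finset.mem_insert_of_mem (hf.mem_toFinset.2 h)))
  have hdiag : f n * jacobiKernel α β (-1) b n n =
      ∑ m ∈ s, if m = n then f m * jacobiKernel α β (-1) b m n else 0 := by
    simp [s]
  simp only [jacobiT, discHilbert, discQ]
  rw [htsum _ fun m hm => by simp [hm], htsum _ fun m hm => by simp [hm],
    htsum _ fun m hm => by simp [hm], htsum _ fun m hm => by simp [hm],
    htsum _ fun m hm => by simp [hm], hdiag]
  simp only [Finset.mul_sum, ← Finset.sum_sub_distrib, ← Finset.sum_add_distrib]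
  refine Finset.sum_congr rfl fun m _ => ?_
  rcases eq_or_ne m n with rfl | hmn
  · simp
  · simp only [hmn, if_false, jacobiKernel_of_ne hαβ hβ ⟨hb1, hb2⟩ hmn]
    ring
end

section
/- Let a ≥ 0. Then there exists a constant C > 0, depending only on a, such that for every sequence f on ℕ for which the relevant series converge and every n ∈ ℕ, |Q_a f(n)| ≤ C (O₁f(n) + O₂f(n)). -/
open MeasureTheory Real Filter

/-- The discrete Hardy operator `O₁ f (n) = (n+1)⁻¹ ∑_{m ≤ n} |f(m)|`. -/
noncomputable def hardyO1 (f : ℕ → ℝ) (n : ℕ) : ℝ :=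
  (∑ m ∈ Finset.range (n + 1), |f m|) / ((n : ℝ) + 1)

/-- The adjoint discrete Hardy operator `O₂ f (n) = ∑_{m ≥ n} |f(m)|/(m+1)`. -/
noncomputable def hardyO2 (f : ℕ → ℝ) (n : ℕ) : ℝ :=
  ∑' m, if n ≤ m then |f m| / ((m : ℝ) + 1) else 0

/-! Off the diagonal `n + m + a ≥ max n m ≥ (max n m + 1) / 2`, so the `m`-th term of
`Q_a f (n)` is at most twice `|f m| / (n + 1)` for `m < n` and twice `|f m| / (m + 1)` for
`m > n`; summing these majorants gives exactly `O₁ f (n) + O₂ f (n)` (both of which also count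
the term `m = n`). -/

lemma cast_add_one_le_two_mul_add {m n : ℕ} {a : ℝ} (hmn : m < n) (ha : 0 ≤ a) :
    (n : ℝ) + 1 ≤ 2 * ((n : ℝ) + m + a) := by
  have : (1 : ℝ) ≤ n := by exact_mod_cast Nat.one_le_of_lt hmn
  linarith [(m.cast_nonneg : (0 : ℝ) ≤ m)]

lemma div_le_two_mul_div {x p q : ℝ} (hx : 0 ≤ x) (hp : 0 < p) (hpq : p ≤ 2 * q) :
    x / q ≤ 2 * (x / p) := by
  rw [← mul_div_assoc, div_le_div_iff₀ (by linarith) hp]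
  nlinarith

lemma abs_discQ_term_le (f : ℕ → ℝ) {a : ℝ} (ha : 0 ≤ a) (n m : ℕ) :
    |if m = n then 0 else f m / ((n : ℝ) + m + a)| ≤
      2 * ((if m ≤ n then |f m| / ((n : ℝ) + 1) else 0) +
        (if n ≤ m then |f m| / ((m : ℝ) + 1) else 0)) := by
  rcases lt_trichotomy m n with hmn | rfl | hnm
  · have hden := cast_add_one_le_two_mul_add (m := m) hmn ha
    have hpos : (0 : ℝ) < n + m + a := by linarith [(n.cast_nonneg : (0 : ℝ) ≤ n)]
    rw [if_neg hmn.ne, if_pos hmn.le, if_neg (not_le.2 hmn), abs_div,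
      abs_of_pos hpos, add_zero]
    exact div_le_two_mul_div (abs_nonneg _) (by positivity) hden
  · simp only [if_true, le_refl, abs_zero]
    positivity
  · have hden : (m : ℝ) + 1 ≤ 2 * ((n : ℝ) + m + a) := by
      linarith [cast_add_one_le_two_mul_add (n := m) hnm ha]
    have hpos : (0 : ℝ) < n + m + a := by linarith [(m.cast_nonneg : (0 : ℝ) ≤ m)]
    rw [if_neg hnm.ne', if_neg (not_le.2 hnm), if_pos hnm.le, abs_div,
      abs_of_pos hpos, zero_add]
    exact div_le_two_mul_div (abs_nonneg _) (by positivity) hden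

lemma hasSum_hardyO1 (f : ℕ → ℝ) (n : ℕ) :
    HasSum (fun m => if m ≤ n then |f m| / ((n : ℝ) + 1) else 0) (hardyO1 f n) := by
  have hsum : hardyO1 f n =
      ∑ m ∈ Finset.range (n + 1), if m ≤ n then |f m| / ((n : ℝ) + 1) else 0 := by
    rw [hardyO1, Finset.sum_div]
    exact Finset.sum_congr rfl fun m hm => (if_pos (Nat.lt_succ_iff.1 (Finset.mem_range.1 hm))).symm
  rw [hsum]
  exact hasSum_sum_of_ne_finset_zero fun m hm =>
    if_neg fun hmn => hm (Finset.mem_range.2 (Nat.lt_succ_of_le hmn))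

lemma hasSum_hardyO2 {f : ℕ → ℝ} (hf : Summable fun m => |f m| / ((m : ℝ) + 1)) (n : ℕ) :
    HasSum (fun m => if n ≤ m then |f m| / ((m : ℝ) + 1) else 0) (hardyO2 f n) :=
  ((hf.indicator (Set.Ici n)).congr fun m => by
    simp only [Set.indicator_apply, Set.mem_Ici]).hasSum

theorem discQ_le_hardy
    (a : ℝ) (ha : 0 ≤ a) :
    ∃ C : ℝ, 0 < C ∧ ∀ f : ℕ → ℝ,
      Summable (fun m => |f m| / ((m : ℝ) + 1)) →
      ∀ n : ℕ, |discQ a f n| ≤ C * (hardyO1 f n + hardyO2 f n) := by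
  refine ⟨2, two_pos, fun f hf n => ?_⟩
  have hmajorant := ((hasSum_hardyO1 f n).add (hasSum_hardyO2 hf n)).mul_left 2
  exact tsum_of_norm_bounded (f := fun m => if m = n then 0 else f m / ((n : ℝ) + m + a))
    hmajorant (abs_discQ_term_le f ha n)
end

section
/- Let a ≥ 0 and w ∈ A_1(ℕ). Then there exists a constant C > 0, depending only on a and the A_1(ℕ) constant of w, such that ‖Q_a f‖_{ℓ^{1,∞}(ℕ,w)} ≤ C ‖f‖_{ℓ^1(ℕ,w)} for every f ∈ ℓ^1(ℕ,w). -/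
open MeasureTheory Real Filter

/-- The discrete Muckenhoupt `A_1(ℕ)` condition with `A_1(ℕ)` constant at most `A`. -/
def A1ConstLE (w : ℕ → ℝ) (A : ℝ) : Prop :=
  ∀ n m : ℕ, n ≤ m → ∀ k : ℕ, n ≤ k → k ≤ m →
    (∑ j ∈ Finset.Icc n m, w j) * (w k)⁻¹ ≤ A * ((m : ℝ) - (n : ℝ) + 1)

/-!
Write `W n = ∑_{j ≤ n} w j`. Applying the `A_1` condition on `[0, max n m]` gives
`W n ≤ Λ (max n m + 1) w m ≤ 2Λ (n + m + a) w m` for `m ≠ n`, hence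
`W n · |Q_a f n| ≤ 2Λ ‖f‖_{ℓ^1(w)}`. If `N` is the largest point of a finite piece of the level
set `{|Q_a f| > t}`, that piece lies in `[0, N]`, so its weight is at most `W N ≤ 2Λ ‖f‖ / t`.
-/

open Finset

lemma one_le_add_add_of_ne {n m : ℕ} {a : ℝ} (ha : 0 ≤ a) (hmn : m ≠ n) :
    1 ≤ (n : ℝ) + m + a := by
  have : (1 : ℝ) ≤ n + m := by exact_mod_cast (show 1 ≤ n + m by omega)
  linarith

lemma add_add_pos_of_ne {n m : ℕ} {a : ℝ} (ha : 0 ≤ a) (hmn : m ≠ n) :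
    0 < (n : ℝ) + m + a :=
  zero_lt_one.trans_le (one_le_add_add_of_ne ha hmn)

namespace A1ConstLE

variable {w : ℕ → ℝ} {Λ : ℝ}

lemma one_le (hw : ∀ n, 0 < w n) (hA : A1ConstLE w Λ) : 1 ≤ Λ := by
  simpa [mul_inv_cancel₀ (hw 0).ne'] using hA 0 0 le_rfl 0 le_rfl le_rfl

lemma sum_Icc_zero_le (hw : ∀ n, 0 < w n) (hA : A1ConstLE w Λ) {M k : ℕ} (hk : k ≤ M) :
    ∑ j ∈ Icc 0 M, w j ≤ Λ * (M + 1) * w k := by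
  have h := hA 0 M M.zero_le k k.zero_le hk
  rw [Nat.cast_zero, sub_zero, mul_inv_le_iff₀ (hw k)] at h
  linarith

lemma sum_Icc_zero_div_le (hw : ∀ n, 0 < w n) (hA : A1ConstLE w Λ) {a : ℝ} (ha : 0 ≤ a)
    {n m : ℕ} (hmn : m ≠ n) :
    (∑ j ∈ Icc 0 n, w j) / ((n : ℝ) + m + a) ≤ 2 * Λ * w m := by
  have hmono : ∑ j ∈ Icc 0 n, w j ≤ ∑ j ∈ Icc 0 (max n m), w j :=
    sum_le_sum_of_subset_of_nonneg (Icc_subset_Icc le_rfl (le_max_left n m))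
      fun j _ _ => (hw j).le
  have hmax : ((max n m : ℕ) : ℝ) + 1 ≤ 2 * ((n : ℝ) + m + a) := by
    have : ((max n m : ℕ) : ℝ) ≤ n + m := by exact_mod_cast (show max n m ≤ n + m by omega)
    have := one_le_add_add_of_ne ha hmn
    linarith
  have hΛ : 0 ≤ Λ * w m := mul_nonneg (zero_le_one.trans (hA.one_le hw)) (hw m).le
  rw [div_le_iff₀ (add_add_pos_of_ne ha hmn)]
  calc ∑ j ∈ Icc 0 n, w j ≤ Λ * ((max n m : ℕ) + 1) * w m :=
        hmono.trans (hA.sum_Icc_zero_le hw (le_max_right n m))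
    _ = Λ * w m * ((max n m : ℕ) + 1) := by ring
    _ ≤ Λ * w m * (2 * ((n : ℝ) + m + a)) := mul_le_mul_of_nonneg_left hmax hΛ
    _ = 2 * Λ * w m * ((n : ℝ) + m + a) := by ring

variable {a : ℝ} {f : ℕ → ℝ}

lemma term_mul_sum_Icc_zero_le (hw : ∀ n, 0 < w n) (hA : A1ConstLE w Λ) (ha : 0 ≤ a)
    (n m : ℕ) :
    (if m = n then 0 else |f m| / ((n : ℝ) + m + a)) * ∑ j ∈ Icc 0 n, w j ≤
      2 * Λ * (|f m| * w m) := by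
  split_ifs with hmn
  · have := hA.one_le hw
    have := hw m
    rw [zero_mul]
    positivity
  · calc |f m| / ((n : ℝ) + m + a) * ∑ j ∈ Icc 0 n, w j
        = |f m| * ((∑ j ∈ Icc 0 n, w j) / ((n : ℝ) + m + a)) := by ring
      _ ≤ |f m| * (2 * Λ * w m) :=
          mul_le_mul_of_nonneg_left (hA.sum_Icc_zero_div_le hw ha hmn) (abs_nonneg _)
      _ = 2 * Λ * (|f m| * w m) := by ring

lemma summable_abs_terms (hw : ∀ n, 0 < w n) (hA : A1ConstLE w Λ) (ha : 0 ≤ a)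
    (hf : Summable fun m => |f m| * w m) (n : ℕ) :
    Summable fun m : ℕ => if m = n then 0 else |f m| / ((n : ℝ) + m + a) := by
  have hW : 0 < ∑ j ∈ Icc 0 n, w j := sum_pos (fun j _ => hw j) (nonempty_Icc.mpr n.zero_le)
  refine (summable_mul_right_iff hW.ne').mp
    (Summable.of_nonneg_of_le (fun m => ?_) (hA.term_mul_sum_Icc_zero_le hw ha n)
      (hf.mul_left _))
  split_ifs with hmn
  · simp
  · have := add_add_pos_of_ne ha hmn
    positivity

lemma abs_discQ_mul_sum_Icc_zero_le (hw : ∀ n, 0 < w n) (hA : A1ConstLE w Λ) (ha : 0 ≤ a)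
    (hf : Summable fun m => |f m| * w m) (n : ℕ) :
    |discQ a f n| * ∑ j ∈ Icc 0 n, w j ≤ 2 * Λ * ∑' m, |f m| * w m := by
  have hnorm : (fun m : ℕ => ‖if m = n then 0 else f m / ((n : ℝ) + m + a)‖) =
      fun m => if m = n then 0 else |f m| / ((n : ℝ) + m + a) := by
    ext m
    split_ifs with hmn
    · simp
    · rw [norm_div, Real.norm_eq_abs, Real.norm_of_nonneg (add_add_pos_of_ne ha hmn).le]
  have hs := hA.summable_abs_terms hw ha hf n
  have htri : |discQ a f n| ≤ ∑' m, if m = n then 0 else |f m| / ((n : ℝ) + m + a) := by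
    rw [← hnorm] at hs ⊢
    exact norm_tsum_le_tsum_norm hs
  calc |discQ a f n| * ∑ j ∈ Icc 0 n, w j
      ≤ (∑' m, if m = n then 0 else |f m| / ((n : ℝ) + m + a)) * ∑ j ∈ Icc 0 n, w j :=
        mul_le_mul_of_nonneg_right htri (sum_nonneg fun j _ => (hw j).le)
    _ = ∑' m, (if m = n then 0 else |f m| / ((n : ℝ) + m + a)) * ∑ j ∈ Icc 0 n, w j :=
        (tsum_mul_right).symm
    _ ≤ ∑' m, 2 * Λ * (|f m| * w m) :=
        (hs.mul_right _).tsum_le_tsum (hA.term_mul_sum_Icc_zero_le hw ha n) (hf.mul_left _)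
    _ = 2 * Λ * ∑' m, |f m| * w m := tsum_mul_left

end A1ConstLE

lemma mul_sum_filter_le_of_mul_sum_Icc_zero_le {w : ℕ → ℝ} (hw : ∀ n, 0 ≤ w n) {t B : ℝ}
    (ht : 0 ≤ t) (hB : 0 ≤ B) {P : ℕ → Prop} [DecidablePred P]
    (h : ∀ n, P n → t * ∑ j ∈ Icc 0 n, w j ≤ B) (s : Finset ℕ) :
    t * ∑ n ∈ s with P n, w n ≤ B := by
  rcases (s.filter P).eq_empty_or_nonempty with hempty | hne
  · simpa [hempty] using hB
  · have hsub : ∑ n ∈ s with P n, w n ≤ ∑ j ∈ Icc 0 ((s.filter P).max' hne), w j :=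
      sum_le_sum_of_subset_of_nonneg
        (fun n hn => mem_Icc.mpr ⟨n.zero_le, (s.filter P).le_max' n hn⟩)
        fun j _ _ => hw j
    exact (mul_le_mul_of_nonneg_left hsub ht).trans
      (h _ (mem_filter.mp ((s.filter P).max'_mem hne)).2)

lemma ofReal_mul_tsum_ite_le_of_mul_sum_Icc_zero_le {w : ℕ → ℝ} (hw : ∀ n, 0 ≤ w n)
    {t B : ℝ} (ht : 0 ≤ t) (hB : 0 ≤ B) {P : ℕ → Prop} [DecidablePred P]
    (h : ∀ n, P n → t * ∑ j ∈ Icc 0 n, w j ≤ B) :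
    ENNReal.ofReal t * ∑' n, (if P n then ENNReal.ofReal (w n) else 0) ≤
      ENNReal.ofReal B := by
  rw [ENNReal.tsum_eq_iSup_sum, ENNReal.mul_iSup]
  refine iSup_le fun s => ?_
  rw [← sum_filter, ← ENNReal.ofReal_sum_of_nonneg fun n _ => hw n,
    ← ENNReal.ofReal_mul ht]
  exact ENNReal.ofReal_le_ofReal (mul_sum_filter_le_of_mul_sum_Icc_zero_le hw ht hB h s)

theorem discQ_weighted_weak_type
    (a : ℝ) (ha : 0 ≤ a) (Λ : ℝ) (hΛ : 0 < Λ) :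
    ∃ C : ℝ, 0 < C ∧ ∀ w : ℕ → ℝ, (∀ n, 0 < w n) → A1ConstLE w Λ →
      ∀ f : ℕ → ℝ, Summable (fun m => |f m| * w m) →
        (∀ n : ℕ, Summable (fun m : ℕ =>
          if m = n then 0 else |f m| / ((n : ℝ) + (m : ℝ) + a))) ∧
        ∀ t : ℝ, 0 < t →
          ENNReal.ofReal t *
              ∑' n, (if t < |discQ a f n| then ENNReal.ofReal (w n) else 0) ≤
            ENNReal.ofReal (C * ∑' m, |f m| * w m) := by
  refine ⟨2 * Λ, by positivity, fun w hw hA f hf => ⟨hA.summable_abs_terms hw ha hf, ?_⟩⟩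
  intro t ht
  have hnorm : 0 ≤ ∑' m, |f m| * w m := tsum_nonneg fun m => mul_nonneg (abs_nonneg _) (hw m).le
  refine ofReal_mul_tsum_ite_le_of_mul_sum_Icc_zero_le (fun n => (hw n).le) ht.le
    (by positivity) fun n hn => ?_
  calc t * ∑ j ∈ Icc 0 n, w j ≤ |discQ a f n| * ∑ j ∈ Icc 0 n, w j :=
        mul_le_mul_of_nonneg_right hn.le (sum_nonneg fun j _ => (hw j).le)
    _ ≤ 2 * Λ * ∑' m, |f m| * w m := hA.abs_discQ_mul_sum_Icc_zero_le hw ha hf n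
end

section
/- Let w ∈ A_1(ℕ). Then there exists a constant C > 0, depending only on the A_1(ℕ) constant of w, such that for every f ∈ ℓ^1(ℕ,w), ∑_{n=0}^∞ O₂f(n) w(n) ≤ C ∑_{m=0}^∞ |f(m)| w(m); that is, the adjoint Hardy operator O₂ is bounded from ℓ^1(ℕ,w) into itself. -/
open MeasureTheory Real Filter

/-! Exchanging the order of summation of nonnegative terms gives
`∑ₙ O₂f(n) w(n) = ∑ₘ |f(m)| · (m+1)⁻¹ ∑_{n ≤ m} w(n)`, and the `A_1` condition on the interval
`[0, m]`, tested at its right endpoint, bounds the average `(m+1)⁻¹ ∑_{n ≤ m} w(n)` by `Λ w(m)`.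
Hence `C = Λ` works. -/

open Finset

theorem hasSum_tsum_tail_mul {a w : ℕ → ℝ} (ha : ∀ m, 0 ≤ a m) (hw : ∀ n, 0 ≤ w n)
    (h : Summable fun m => a m * ∑ n ∈ range (m + 1), w n) :
    HasSum (fun n => (∑' m, if n ≤ m then a m else 0) * w n)
      (∑' m, a m * ∑ n ∈ range (m + 1), w n) := by
  set F : ℕ → ℕ → ℝ := fun n m => (if n ≤ m then a m else 0) * w n
  have hF_nonneg : ∀ n m, 0 ≤ F n m := fun n m => by
    have := ha m; have := hw n; positivity
  have hcol_support : ∀ m n, n ∉ range (m + 1) → F n m = 0 := fun m n hn => by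
    have : ¬ n ≤ m := by simpa [Nat.lt_succ_iff] using hn
    simp [F, this]
  have hcol : ∀ m, ∑' n, F n m = a m * ∑ n ∈ range (m + 1), w n := fun m => by
    rw [tsum_eq_sum (hcol_support m), mul_sum]
    exact sum_congr rfl fun n hn => by simp [F, Nat.lt_succ_iff.mp (mem_range.mp hn)]
  -- Summability is checked column by column, where the support is finite.
  have hF : Summable (Function.uncurry F) := by
    have hswap : Summable fun p : ℕ × ℕ => F p.2 p.1 :=
      (summable_prod_of_nonneg fun p => hF_nonneg p.2 p.1).mpr
        ⟨fun m => summable_of_ne_finset_zero (hcol_support m), by simpa only [hcol] using h⟩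
    exact hswap.prod_symm
  have hrow : ∀ n, ∑' m, F n m = (∑' m, if n ≤ m then a m else 0) * w n := fun n =>
    tsum_mul_right
  rw [← tsum_congr hcol, hF.tsum_comm]
  exact funext hrow ▸ hF.prod.hasSum

theorem A1ConstLE.sum_range_succ_le {w : ℕ → ℝ} {Λ : ℝ} (hA : A1ConstLE w Λ) {m : ℕ}
    (hwm : 0 < w m) : ∑ n ∈ range (m + 1), w n ≤ Λ * ((m : ℝ) + 1) * w m := by
  have h := hA 0 m m.zero_le m m.zero_le le_rfl
  rwa [Nat.cast_zero, sub_zero, ← Nat.range_succ_eq_Icc_zero, ← div_eq_mul_inv,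
    div_le_iff₀ hwm] at h

theorem adjoint_hardy_weighted_l1_bound
    (Λ : ℝ) (hΛ : 0 < Λ) :
    ∃ C : ℝ, 0 < C ∧ ∀ w : ℕ → ℝ, (∀ n, 0 < w n) → A1ConstLE w Λ →
      ∀ f : ℕ → ℝ, Summable (fun m => |f m| * w m) →
        Summable (fun n => hardyO2 f n * w n) ∧
        ∑' n, hardyO2 f n * w n ≤ C * ∑' m, |f m| * w m := by
  refine ⟨Λ, hΛ, fun w hw hA f hf => ?_⟩
  set a : ℕ → ℝ := fun m => |f m| / ((m : ℝ) + 1)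
  have ha : ∀ m, 0 ≤ a m := fun m => by positivity
  have hbound : ∀ m, a m * ∑ n ∈ range (m + 1), w n ≤ Λ * (|f m| * w m) := fun m => calc
    a m * ∑ n ∈ range (m + 1), w n ≤ a m * (Λ * ((m : ℝ) + 1) * w m) :=
      mul_le_mul_of_nonneg_left (hA.sum_range_succ_le (hw m)) (ha m)
    _ = Λ * (|f m| * w m) := by simp only [a]; field_simp
  have hsum : Summable fun m => a m * ∑ n ∈ range (m + 1), w n :=
    (hf.mul_left Λ).of_nonneg_of_le
      (fun m => mul_nonneg (ha m) (sum_nonneg fun n _ => (hw n).le)) hbound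
  have hO2 : HasSum (fun n => hardyO2 f n * w n) (∑' m, a m * ∑ n ∈ range (m + 1), w n) :=
    hasSum_tsum_tail_mul ha (fun n => (hw n).le) hsum
  refine ⟨hO2.summable, ?_⟩
  rw [hO2.tsum_eq, ← tsum_mul_left]
  exact hsum.tsum_le_tsum hbound (hf.mul_left Λ)
end
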